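/- arXiv:hep-th/0310105 — 3 statements merged into one kernel-verified Lean document; each statement's English description precedes it below -/
import Mathlib

section
/- The function f(u₊, u₋) defined implicitly by f = 2u₊/ż(t) + z(t), u₋ = u₊/(ż(t))² + t, for a smooth function z with nonvanishing derivative ż, satisfies the Courant–Hilbert equation ∂f/∂u₊ · ∂f/∂u₋ = 1 wherever the implicit equation defines t as a differentiable function of (u₊, u₋). -/
noncomputable section

/-- The Courant–Hilbert construction.  Let `z : ℝ → ℝ` be smooth with
nowhere-vanishing derivative `ż`, and suppose the implicit equation
`u₋ = u₊ / ż(t)² + t` defines `t = T(u₊,u₋)` as a function which is differentiable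
at the point `p` (the equation holding on a neighbourhood of `p`).  Then the function
`f(u₊,u₋) = 2u₊/ż(T(u₊,u₋)) + z(T(u₊,u₋))` satisfies the Courant–Hilbert equation
`(∂f/∂u₊)·(∂f/∂u₋) = 1` at `p`. -/
theorem courant_hilbert_general_solution
    (z : ℝ → ℝ) (hz : ContDiff ℝ (⊤ : ℕ∞) z) (hz' : ∀ t, deriv z t ≠ 0)
    (T : ℝ × ℝ → ℝ) (p : ℝ × ℝ) (hT : DifferentiableAt ℝ T p)
    (himp : ∀ᶠ q : ℝ × ℝ in nhds p, q.2 = q.1 / (deriv z (T q)) ^ 2 + T q) :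
    fderiv ℝ (fun q : ℝ × ℝ => 2 * q.1 / deriv z (T q) + z (T q)) p (1, 0) *
      fderiv ℝ (fun q : ℝ × ℝ => 2 * q.1 / deriv z (T q) + z (T q)) p (0, 1) = 1 := by
  set L := fderiv ℝ T p with hL
  have hTL : HasFDerivAt T L p := hT.hasFDerivAt
  set t0 := T p with ht0
  set w := deriv z t0 with hw
  set w' := deriv (deriv z) t0 with hw'
  have hwne : w ≠ 0 := hz' t0
  have hzdiff : Differentiable ℝ z := hz.differentiable (by simp)
  have hz't : Differentiable ℝ (deriv z) := by
    have h2 : ContDiff ℝ ((⊤:ℕ∞):WithTop ℕ∞) z := hz.of_le (by simp)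
    exact (contDiff_infty_iff_deriv.mp h2).2.differentiable (by simp)
  -- derivative of q ↦ deriv z (T q)
  have hu : HasFDerivAt (fun q => deriv z (T q)) (w' • L) p :=
    ((hz't t0).hasDerivAt).comp_hasFDerivAt p hTL
  -- derivative of q ↦ z (T q)
  have hzT : HasFDerivAt (fun q => z (T q)) (w • L) p :=
    ((hzdiff t0).hasDerivAt).comp_hasFDerivAt p hTL
  -- derivative of q ↦ (deriv z (T q))⁻¹
  have hinv : HasFDerivAt (fun q => (deriv z (T q))⁻¹)
      ((-w'/w^2) • L) p := by
    have h1 : HasDerivAt (fun y : ℝ => y⁻¹) (-(w^2)⁻¹) w := hasDerivAt_inv hwne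
    have := h1.comp_hasFDerivAt p hu
    simpa [smul_smul, div_eq_mul_inv, mul_comm, Function.comp_def, ← neg_smul] using this
  -- derivative of q ↦ 2 * q.1
  have hnum : HasFDerivAt (fun q : ℝ × ℝ => 2 * q.1)
      ((2:ℝ) • ContinuousLinearMap.fst ℝ ℝ ℝ) p := hasFDerivAt_fst.const_mul 2
  -- total derivative of f
  have hF : HasFDerivAt (fun q : ℝ × ℝ => 2 * q.1 / deriv z (T q) + z (T q))
      (((2 * p.1) • ((-w'/w^2) • L) + w⁻¹ • ((2:ℝ) • ContinuousLinearMap.fst ℝ ℝ ℝ))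
        + w • L) p := by
    have := (hnum.mul hinv).add hzT
    simpa [div_eq_mul_inv, Pi.mul_def, Pi.add_def, ← ht0, ← hw] using this
  rw [hF.fderiv]
  -- implicit equation derivative
  have hsq : HasFDerivAt (fun q => ((deriv z (T q))^2)⁻¹)
      ((-(2*w*w')/(w^2)^2) • L) p := by
    have h1 : HasDerivAt (fun y : ℝ => (y^2)⁻¹) (-(2*w)/(w^2)^2) w := by
      have := (hasDerivAt_pow 2 w).inv (pow_ne_zero 2 hwne)
      simpa [Pi.inv_def] using this
    have := h1.comp_hasFDerivAt p hu
    simpa [smul_smul, div_eq_mul_inv, mul_comm, mul_assoc, mul_left_comm, Function.comp_def, ← neg_smul] using this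
  have hG : HasFDerivAt (fun q : ℝ × ℝ => q.1 / (deriv z (T q))^2 + T q)
      ((p.1 • ((-(2*w*w')/(w^2)^2) • L) + ((deriv z (T p))^2)⁻¹ • ContinuousLinearMap.fst ℝ ℝ ℝ)
        + L) p := by
    have := (hasFDerivAt_fst.mul hsq).add hTL
    simpa [div_eq_mul_inv, Pi.mul_def, Pi.add_def] using this
  have hsnd : HasFDerivAt (fun q : ℝ × ℝ => q.2)
      ((p.1 • ((-(2*w*w')/(w^2)^2) • L) + ((deriv z (T p))^2)⁻¹ • ContinuousLinearMap.fst ℝ ℝ ℝ)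
        + L) p := hG.congr_of_eventuallyEq himp
  have huniq := hsnd.unique hasFDerivAt_snd
  set a := L (1, 0) with ha
  set b := L (0, 1) with hb
  have e1 : p.1 * ((-(2*w*w')/(w^2)^2) * a) + (w^2)⁻¹ * 1 + a = 0 := by
    have := congrArg (fun M : ℝ × ℝ →L[ℝ] ℝ => M (1, 0)) huniq
    simpa [ContinuousLinearMap.add_apply, ContinuousLinearMap.smul_apply, smul_eq_mul,
      ← ht0] using this
  have e2 : p.1 * ((-(2*w*w')/(w^2)^2) * b) + b = 1 := by
    have := congrArg (fun M : ℝ × ℝ →L[ℝ] ℝ => M (0, 1)) huniq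
    simpa [ContinuousLinearMap.add_apply, ContinuousLinearMap.smul_apply, smul_eq_mul,
      ← ht0] using this
  simp only [ContinuousLinearMap.add_apply, ContinuousLinearMap.smul_apply,
    ContinuousLinearMap.coe_fst', smul_eq_mul, ← ha, ← hb]
  have hw3 : w^3 ≠ 0 := pow_ne_zero _ hwne
  have h1 : a * (w^3 - 2*p.1*w') = -w := by
    field_simp at e1
    apply mul_left_cancel₀ hw3
    linear_combination w^3 * e1
  have h2 : b * (w^3 - 2*p.1*w') = w^3 := by
    field_simp at e2
    apply mul_left_cancel₀ hwne
    linear_combination w * e2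
  have key : (2*p.1 * ((-w'/w^2)*a) + w⁻¹*(2*1) + w*a) = w⁻¹ := by
    field_simp
    linear_combination h1
  have key2 : (2*p.1*((-w'/w^2)*b) + w⁻¹*(2*0) + w*b) = w := by
    field_simp
    linear_combination h2
  rw [key, key2, inv_mul_cancel₀ hwne]
end
end

section
/- If a hypercomplex structure (quaternionic triple of complex structures J^α with J^α J^β = −δ^{αβ} Id + ε^{αβγ} J^γ) is covariantly constant with respect to two torsion-free affine connections ∇ and ∇', then ∇ = ∇'. Equivalently, the torsionless connection preserving a hypercomplex structure (when it exists) is unique. -/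
/-!
The difference `D = Γ - Γ'` of two torsion-free connections is a tensor symmetric in its two
lower indices, and since both connections preserve `J^α`, each `D(X, ·)` commutes with every
`J^α`. Symmetry lets `J^α` act on either argument, so with `(I, J, K) = (J^0, J^1, J^2)`,
`D(IX, JY) = J I D(X, Y) = I J D(X, Y)`. Hence `2 K D = 0`, and `K² = -1` forces `D = 0`.
-/

noncomputable section

/-- The totally antisymmetric symbol on three indices, `ε¹²³ = 1`
(here indices run over `Fin 3`, so `ε 0 1 2 = 1`). -/
def eps3 : Fin 3 → Fin 3 → Fin 3 → ℝ := fun α β γ =>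
  if (α, β, γ) = (0, 1, 2) ∨ (α, β, γ) = (1, 2, 0) ∨ (α, β, γ) = (2, 0, 1) then 1
  else if (α, β, γ) = (0, 2, 1) ∨ (α, β, γ) = (2, 1, 0) ∨ (α, β, γ) = (1, 0, 2) then -1
  else 0

theorem quaternion_relations {n : Type*} [Fintype n] [DecidableEq n] (J : Fin 3 → Matrix n n ℝ)
    (h : ∀ (α β : Fin 3) (X Y : n), ∑ Z, J α X Z * J β Z Y
      = -((if α = β then 1 else 0) * (if X = Y then 1 else 0))
        + ∑ γ : Fin 3, eps3 α β γ * J γ X Y) :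
    J 0 * J 1 = J 2 ∧ J 1 * J 0 = -J 2 ∧ J 2 * J 2 = -1 := by
  refine ⟨?_, ?_, ?_⟩ <;> ext X Y <;> simp [Matrix.mul_apply, h, eps3, Matrix.one_apply]

namespace Matrix

variable {n R : Type*} [Fintype n] [CommRing R] {D : n → Matrix n n R} {I J K : Matrix n n R}

/-- `∑ σ, I μ σ • D σ` is `D` with `I` applied to its first argument. -/
theorem sum_smul_eq_mul_of_symm (hD : ∀ μ ν ρ, D μ ν ρ = D ν μ ρ) (hI : ∀ μ, Commute (D μ) I)
    (μ : n) : ∑ σ, I μ σ • D σ = D μ * I := by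
  ext ν ρ
  calc (∑ σ, I μ σ • D σ) ν ρ = (I * D ν) μ ρ := by
        simp only [sum_apply, smul_apply, smul_eq_mul, mul_apply, hD _ ν]
    _ = (D ν * I) μ ρ := by rw [(hI ν).eq]
    _ = (D μ * I) ν ρ := by simp only [mul_apply, hD ν μ]

theorem mul_mul_eq_mul_mul_of_symm (hD : ∀ μ ν ρ, D μ ν ρ = D ν μ ρ)
    (hI : ∀ μ, Commute (D μ) I) (hJ : ∀ μ, Commute (D μ) J) (μ : n) :
    D μ * (I * J) = D μ * (J * I) :=
  calc D μ * (I * J) = (∑ σ, I μ σ • D σ) * J := by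
        rw [sum_smul_eq_mul_of_symm hD hI, mul_assoc]
    _ = J * ∑ σ, I μ σ • D σ := by
        simp only [Finset.sum_mul, Finset.mul_sum, smul_mul_assoc, mul_smul_comm, (hJ _).eq]
    _ = D μ * (J * I) := by
        rw [sum_smul_eq_mul_of_symm hD hI, ← mul_assoc, ← (hJ μ).eq, mul_assoc]

theorem eq_zero_of_symm_of_commute_quaternion [DecidableEq n] [IsAddTorsionFree R]
    (hIJ : I * J = K) (hJI : J * I = -K) (hK : K * K = -1) (hD : ∀ μ ν ρ, D μ ν ρ = D ν μ ρ)
    (hI : ∀ μ, Commute (D μ) I) (hJ : ∀ μ, Commute (D μ) J) : D = 0 := by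
  funext μ
  have hDK : D μ * K = 0 := by
    have h := mul_mul_eq_mul_mul_of_symm hD hI hJ μ
    rw [hIJ, hJI, mul_neg, eq_neg_iff_add_eq_zero, ← two_nsmul] at h
    exact (two_nsmul_eq_zero (M := n → n → R)).mp h
  calc D μ = -(D μ * K * K) := by rw [mul_assoc, hK, mul_neg, mul_one, neg_neg]
    _ = 0 := by rw [hDK, zero_mul, neg_zero]

end Matrix

section Connection

open Matrix

variable {n : Type*} [Fintype n] [DecidableEq n]

/-- `(∇_μ A)_ν^ρ` in coordinates, where `Γ x μ ν ρ` stands for `Γ_{μν}^ρ` at `x`. -/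
def covDeriv (Γ : (n → ℝ) → n → Matrix n n ℝ) (A : (n → ℝ) → Matrix n n ℝ) (x : n → ℝ) (μ : n) :
    Matrix n n ℝ :=
  of fun ν ρ => fderiv ℝ (fun y => A y ν ρ) x (Pi.single μ 1)
    - (∑ σ, Γ x μ ν σ * A x σ ρ) + (∑ σ, Γ x μ σ ρ * A x ν σ)

theorem covDeriv_sub_covDeriv (Γ Γ' : (n → ℝ) → n → Matrix n n ℝ) (A : (n → ℝ) → Matrix n n ℝ)
    (x : n → ℝ) (μ : n) :
    covDeriv Γ A x μ - covDeriv Γ' A x μ = A x * (Γ x μ - Γ' x μ) - (Γ x μ - Γ' x μ) * A x := by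
  ext ν ρ
  simp only [covDeriv, mul_sub, sub_mul, Matrix.sub_apply, of_apply, mul_apply,
    mul_comm (A x ν _)]
  ring

theorem commute_sub_of_covDeriv_eq_zero {Γ Γ' : (n → ℝ) → n → Matrix n n ℝ}
    {A : (n → ℝ) → Matrix n n ℝ} {x : n → ℝ} {μ : n} (h : covDeriv Γ A x μ = 0)
    (h' : covDeriv Γ' A x μ = 0) : Commute (Γ x μ - Γ' x μ) (A x) := by
  have := covDeriv_sub_covDeriv Γ Γ' A x μ
  rw [h, h', sub_zero, eq_comm, sub_eq_zero] at this
  exact this.symm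

end Connection

/-- Obata: on a manifold of dimension `4r` (in coordinates) carrying a
hypercomplex structure, i.e. a triple `J^α` of complex structures satisfying the
quaternionic algebra `J^α J^β = −δ^{αβ} Id + ε^{αβγ} J^γ`, any two torsion-free affine
connections `Γ`, `Γ'` with respect to which the `J^α` are covariantly constant
coincide: the torsionless connection preserving a hypercomplex structure is unique.
(`Γ x μ ν ρ` denotes `Γ_{μν}^ρ`, and covariant constancy reads
`∂_μ (J^α)_ν{}^ρ − Γ_{μν}^σ (J^α)_σ{}^ρ + Γ_{μσ}^ρ (J^α)_ν{}^σ = 0`.) -/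
theorem obata_connection_uniqueness
    (r : ℕ)
    (J : Fin 3 → (Fin (4 * r) → ℝ) → Fin (4 * r) → Fin (4 * r) → ℝ)
    (hquat : ∀ (x : Fin (4 * r) → ℝ) (α β : Fin 3) (X Y : Fin (4 * r)),
      ∑ Z : Fin (4 * r), J α x X Z * J β x Z Y
        = -((if α = β then 1 else 0) * (if X = Y then 1 else 0))
          + ∑ γ : Fin 3, eps3 α β γ * J γ x X Y)
    (Γ Γ' : (Fin (4 * r) → ℝ) → Fin (4 * r) → Fin (4 * r) → Fin (4 * r) → ℝ)
    (hΓtf : ∀ x μ ν ρ, Γ x μ ν ρ = Γ x ν μ ρ)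
    (hΓ'tf : ∀ x μ ν ρ, Γ' x μ ν ρ = Γ' x ν μ ρ)
    (hΓJ : ∀ (x : Fin (4 * r) → ℝ) (α : Fin 3) (μ ν ρ : Fin (4 * r)),
      fderiv ℝ (fun y => J α y ν ρ) x (Pi.single μ 1)
        - (∑ σ : Fin (4 * r), Γ x μ ν σ * J α x σ ρ)
        + (∑ σ : Fin (4 * r), Γ x μ σ ρ * J α x ν σ) = 0)
    (hΓ'J : ∀ (x : Fin (4 * r) → ℝ) (α : Fin 3) (μ ν ρ : Fin (4 * r)),
      fderiv ℝ (fun y => J α y ν ρ) x (Pi.single μ 1)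
        - (∑ σ : Fin (4 * r), Γ' x μ ν σ * J α x σ ρ)
        + (∑ σ : Fin (4 * r), Γ' x μ σ ρ * J α x ν σ) = 0) :
    Γ = Γ' := by
  funext x μ
  obtain ⟨hIJ, hJI, hK⟩ := quaternion_relations (fun α => J α x) (hquat x)
  let D : Fin (4 * r) → Matrix (Fin (4 * r)) (Fin (4 * r)) ℝ := Γ x - Γ' x
  have hcomm : ∀ α μ, Commute (D μ) (J α x) := fun α μ =>
    commute_sub_of_covDeriv_eq_zero (A := J α) (by ext ν ρ; exact hΓJ x α μ ν ρ)
      (by ext ν ρ; exact hΓ'J x α μ ν ρ)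
  have hsymm : ∀ μ ν ρ, D μ ν ρ = D ν μ ρ := fun μ ν ρ => by
    simp only [D, Pi.sub_apply, hΓtf x μ ν ρ, hΓ'tf x μ ν ρ]
  have hD := Matrix.eq_zero_of_symm_of_commute_quaternion hIJ hJI hK hsymm (hcomm 0) (hcomm 1)
  exact sub_eq_zero.mp (congr_fun hD μ)
end
end

section
/- For the superpotential W(φ) = √(3/2)·(ε m e^{2αφ} + 2λ² m^{−1} e^{αφ}) with α² = 1/3, the identity V = (∂W/∂φ)² − W² reproduces the scalar potential V(φ) = ½ ε² m² e^{4αφ} − 2ελ² e^{3αφ} − Λ e^{2αφ} if and only if the constraint Λ = 4λ⁴/m² holds (for m ≠ 0). -/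
/-! With `E = e^{αφ}`, `W = √(3/2)(a + b)` and `W' = √(3/2) α (2a + b)` where `a = ε m E²` and
`b = 2λ² m⁻¹ E`. Since `(3/2)(α²(2a + b)² − (a + b)²) = a²/2 − ab − b²` when `α² = 1/3`, and
`ab = 2ελ²E³`, `b² = (4λ⁴/m²) E²` when `m ≠ 0`, the identity `W'² − W² = V` holds exactly for
`Λ = 4λ⁴/m²`; distinct values of `Λ` give potentials differing by a nonzero multiple of
`e^{2αφ}`. -/

noncomputable section

/-- The superpotential `W(φ) = √(3/2)·(ε m e^{2αφ} + 2λ² m⁻¹ e^{αφ})`. -/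
def Wsup (ε m lam α : ℝ) (φ : ℝ) : ℝ :=
  Real.sqrt (3 / 2) * (ε * m * Real.exp (2 * α * φ) + 2 * lam ^ 2 * m⁻¹ * Real.exp (α * φ))

/-- The scalar potential `V(φ) = ½ ε² m² e^{4αφ} − 2ελ² e^{3αφ} − Λ e^{2αφ}`. -/
def Vpot (ε m lam Λ α : ℝ) (φ : ℝ) : ℝ :=
  (1 / 2) * ε ^ 2 * m ^ 2 * Real.exp (4 * α * φ)
    - 2 * ε * lam ^ 2 * Real.exp (3 * α * φ) - Λ * Real.exp (2 * α * φ)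

lemma exp_mul_mul_eq_pow (n : ℕ) (α φ : ℝ) :
    Real.exp (n * α * φ) = Real.exp (α * φ) ^ n := by
  rw [mul_assoc, Real.exp_nat_mul]

lemma hasDerivAt_Wsup (ε m lam α φ : ℝ) :
    HasDerivAt (Wsup ε m lam α)
      (Real.sqrt (3 / 2) * α
        * (2 * (ε * m * Real.exp (2 * α * φ)) + 2 * lam ^ 2 * m⁻¹ * Real.exp (α * φ))) φ := by
  have hexp : ∀ c : ℝ, HasDerivAt (fun φ ↦ Real.exp (c * φ)) (Real.exp (c * φ) * c) φ :=
    fun c ↦ by simpa using ((hasDerivAt_id φ).const_mul c).exp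
  have hsum := ((hexp (2 * α)).const_mul (ε * m)).add ((hexp α).const_mul (2 * lam ^ 2 * m⁻¹))
  exact (hsum.const_mul (Real.sqrt (3 / 2))).congr_deriv (by ring)

lemma superpotential_sq_sub_sq {s α : ℝ} (hs : s ^ 2 = 3 / 2) (hα : α ^ 2 = 1 / 3) (a b : ℝ) :
    (s * α * (2 * a + b)) ^ 2 - (s * (a + b)) ^ 2 = a ^ 2 / 2 - a * b - b ^ 2 := by
  linear_combination (α ^ 2 * (2 * a + b) ^ 2 - (a + b) ^ 2) * hs + 3 / 2 * (2 * a + b) ^ 2 * hα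

lemma deriv_Wsup_sq_sub_Wsup_sq {ε m lam α : ℝ} (hm : m ≠ 0) (hα : α ^ 2 = 1 / 3) (φ : ℝ) :
    deriv (Wsup ε m lam α) φ ^ 2 - Wsup ε m lam α φ ^ 2
      = Vpot ε m lam (4 * lam ^ 4 / m ^ 2) α φ := by
  rw [(hasDerivAt_Wsup ε m lam α φ).deriv, Wsup,
    superpotential_sq_sub_sq (Real.sq_sqrt (by norm_num)) hα, Vpot]
  have h2 := exp_mul_mul_eq_pow 2 α φ
  have h3 := exp_mul_mul_eq_pow 3 α φ
  have h4 := exp_mul_mul_eq_pow 4 α φ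
  push_cast at h2 h3 h4
  rw [h2, h3, h4]
  field_simp
  ring

lemma Vpot_sub_Vpot (ε m lam Λ Λ' α φ : ℝ) :
    Vpot ε m lam Λ α φ - Vpot ε m lam Λ' α φ = (Λ' - Λ) * Real.exp (2 * α * φ) := by
  rw [Vpot, Vpot]
  ring

lemma Vpot_eq_Vpot_iff (ε m lam Λ Λ' α : ℝ) :
    (∀ φ, Vpot ε m lam Λ α φ = Vpot ε m lam Λ' α φ) ↔ Λ = Λ' := by
  refine ⟨fun h ↦ ?_, fun h _ ↦ h ▸ rfl⟩
  have h0 := Vpot_sub_Vpot ε m lam Λ Λ' α 0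
  rw [h 0, sub_self, mul_zero, Real.exp_zero, mul_one] at h0
  linarith

theorem superpotential_reproduces_potential_iff_constraint_general
    (ε m lam Λ α : ℝ) (hm : m ≠ 0) (hα : α ^ 2 = 1 / 3) :
    (∀ φ : ℝ, Vpot ε m lam Λ α φ
        = (deriv (Wsup ε m lam α) φ) ^ 2 - (Wsup ε m lam α φ) ^ 2)
      ↔ Λ = 4 * lam ^ 4 / m ^ 2 := by
  simp only [deriv_Wsup_sq_sub_Wsup_sq hm hα]
  exact Vpot_eq_Vpot_iff ε m lam Λ _ α

/-- with `α² = 1/3` and `m ≠ 0`, the identity `V = (∂W/∂φ)² − W²` holds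
(for all φ) if and only if the constraint `Λ = 4λ⁴/m²` holds. -/
theorem superpotential_reproduces_potential_iff_constraint
    (ε m lam Λ α : ℝ) (hm : m ≠ 0) (hα : α ^ 2 = 1 / 3)
    (hε : ε = -1 ∨ ε = 0 ∨ ε = 1) :
    (∀ φ : ℝ, Vpot ε m lam Λ α φ
        = (deriv (Wsup ε m lam α) φ) ^ 2 - (Wsup ε m lam α φ) ^ 2)
      ↔ Λ = 4 * lam ^ 4 / m ^ 2 :=
  superpotential_reproduces_potential_iff_constraint_general ε m lam Λ α hm hα
end
end
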